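/- Upper tail bound in expectation form: if i is hypergeometric with parameters N, M, n, then for all t ≥ 0, Pr[i ≥ E[i] + t·n] ≤ exp(−2t²n), where E[i] = n·M/N. -/

import Mathlib

/-!
Chernoff's method with exponent `4 t`. The factorial moments of the hypergeometric law,
`∑ᵢ C(i, k) h(i) = C(M, k) C(N - k, n - k) / C(N, n)`, are dominated by those of the binomial law
`Bin(n, M / N)`, namely `C(n, k) (M / N)ᵏ`, because `C(M, k) / C(N, k) ≤ (M / N)ᵏ`. Hence for
`y ≥ 1` the generating function `∑ᵢ h(i) yⁱ` is at most `(1 - M / N + (M / N) y)ⁿ`, and Hoeffding's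
lemma for a Bernoulli variable bounds each factor at `y = e^λ` by `exp (λ M / N + λ² / 8)`.
-/

open Finset Real ProbabilityTheory MeasureTheory

theorem Finset.sum_filter_le_sum_mul_exp {ι : Type*} (s : Finset ι) (w x : ι → ℝ)
    (hw : ∀ i ∈ s, 0 ≤ w i) (a : ℝ) [DecidablePred fun i => a ≤ x i] {l : ℝ} (hl : 0 ≤ l) :
    ∑ i ∈ s with a ≤ x i, w i ≤ ∑ i ∈ s, w i * exp (l * (x i - a)) :=
  calc ∑ i ∈ s with a ≤ x i, w i
      ≤ ∑ i ∈ s with a ≤ x i, w i * exp (l * (x i - a)) := sum_le_sum fun i hi =>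
        le_mul_of_one_le_right (hw i (mem_filter.1 hi).1)
          (one_le_exp (mul_nonneg hl (sub_nonneg.2 (mem_filter.1 hi).2)))
    _ ≤ ∑ i ∈ s, w i * exp (l * (x i - a)) :=
        sum_le_sum_of_subset_of_nonneg (filter_subset _ _) fun i hi _ =>
          mul_nonneg (hw i hi) (exp_pos _).le

namespace Nat

theorem sum_choose_mul_choose_mul_choose {N M n k : ℕ} (hMN : M ≤ N) (hkn : k ≤ n) :
    ∑ i ∈ range (n + 1), i.choose k * (M.choose i * (N - M).choose (n - i))
      = M.choose k * (N - k).choose (n - k) := by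
  obtain ⟨j, rfl⟩ : ∃ j, n = k + j := ⟨n - k, by omega⟩
  rw [show k + j + 1 = k + (j + 1) by ring, sum_range_add,
    sum_eq_zero fun i hi => by rw [choose_eq_zero_of_lt (mem_range.1 hi), zero_mul], zero_add]
  simp_rw [← mul_assoc, mul_comm ((k + _).choose k), choose_mul (le_add_right k _), mul_assoc,
    ← mul_sum, Nat.add_sub_cancel_left, Nat.add_sub_add_left]
  rcases le_or_gt k M with hkM | hkM
  · rw [show N - k = (M - k) + (N - M) by omega, add_choose_eq,
      Finset.Nat.sum_antidiagonal_eq_sum_range_succ_mk]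
  · simp [choose_eq_zero_of_lt hkM]

theorem descFactorial_mul_pow_le {M N : ℕ} (hMN : M ≤ N) (k : ℕ) :
    M.descFactorial k * N ^ k ≤ N.descFactorial k * M ^ k :=
  calc M.descFactorial k * N ^ k = ∏ i ∈ range k, (M - i) * N := by
        simp [descFactorial_eq_prod_range, prod_mul_distrib]
    _ ≤ ∏ i ∈ range k, (N - i) * M := prod_le_prod' fun i _ => by
        rw [Nat.sub_mul, Nat.sub_mul, Nat.mul_comm M N]
        exact Nat.sub_le_sub_left (Nat.mul_le_mul_left i hMN) _
    _ = N.descFactorial k * M ^ k := by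
        simp [descFactorial_eq_prod_range, prod_mul_distrib]

theorem choose_mul_pow_le {M N : ℕ} (hMN : M ≤ N) (k : ℕ) :
    M.choose k * N ^ k ≤ N.choose k * M ^ k := by
  have h := descFactorial_mul_pow_le hMN k
  rw [descFactorial_eq_factorial_mul_choose, descFactorial_eq_factorial_mul_choose,
    mul_assoc, mul_assoc] at h
  exact Nat.le_of_mul_le_mul_left h (factorial_pos k)

end Nat

theorem one_add_pow_eq_sum_range_choose_mul_pow {R : Type*} [CommSemiring R] {i n : ℕ}
    (hin : i ≤ n) (s : R) :
    (1 + s) ^ i = ∑ k ∈ range (n + 1), (i.choose k : R) * s ^ k := by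
  rw [add_comm, add_pow, ← sum_subset (range_subset_range.2 (Nat.succ_le_succ hin))]
  · exact sum_congr rfl fun m _ => by rw [one_pow, mul_one, mul_comm]
  · intro k _ hk
    rw [Nat.choose_eq_zero_of_lt (by simpa using hk)]
    simp

theorem sum_choose_mul_choose_mul_one_add_pow {N M n : ℕ} (hMN : M ≤ N) (s : ℝ) :
    ∑ i ∈ range (n + 1), (M.choose i * (N - M).choose (n - i) : ℝ) * (1 + s) ^ i
      = ∑ k ∈ range (n + 1), (M.choose k * (N - k).choose (n - k) : ℝ) * s ^ k :=
  calc ∑ i ∈ range (n + 1), (M.choose i * (N - M).choose (n - i) : ℝ) * (1 + s) ^ i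
      = ∑ i ∈ range (n + 1), ∑ k ∈ range (n + 1),
          (M.choose i * (N - M).choose (n - i) : ℝ) * (i.choose k * s ^ k) :=
        sum_congr rfl fun i hi => by
          rw [one_add_pow_eq_sum_range_choose_mul_pow (Nat.lt_succ_iff.1 (mem_range.1 hi)),
            mul_sum]
    _ = ∑ k ∈ range (n + 1), (M.choose k * (N - k).choose (n - k) : ℝ) * s ^ k := by
        rw [sum_comm]
        refine sum_congr rfl fun k hk => ?_
        have h := congrArg (Nat.cast (R := ℝ))
          (Nat.sum_choose_mul_choose_mul_choose hMN (Nat.lt_succ_iff.1 (mem_range.1 hk)))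
        push_cast at h
        rw [← h, sum_mul]
        exact sum_congr rfl fun i _ => by ring

theorem choose_mul_choose_sub_le_choose_mul_pow {N M n k : ℕ} (hMN : M ≤ N) (hN : 0 < N)
    (hkn : k ≤ n) :
    (M.choose k * (N - k).choose (n - k) : ℝ) ≤ N.choose n * n.choose k * ((M : ℝ) / N) ^ k := by
  rw [div_pow, ← mul_div_assoc, le_div_iff₀ (by positivity)]
  have key : M.choose k * (N - k).choose (n - k) * N ^ k ≤ N.choose n * n.choose k * M ^ k :=
    calc M.choose k * (N - k).choose (n - k) * N ^ k
        = M.choose k * N ^ k * (N - k).choose (n - k) := by ring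
      _ ≤ N.choose k * M ^ k * (N - k).choose (n - k) :=
          Nat.mul_le_mul_right _ (Nat.choose_mul_pow_le hMN k)
      _ = N.choose n * n.choose k * M ^ k := by rw [Nat.choose_mul hkn]; ring
  exact_mod_cast key

theorem sum_choose_mul_choose_mul_pow_le {N M n : ℕ} (hMN : M ≤ N) (hN : 0 < N) {s : ℝ}
    (hs : 0 ≤ s) :
    ∑ i ∈ range (n + 1), (M.choose i * (N - M).choose (n - i) : ℝ) * (1 + s) ^ i
      ≤ N.choose n * (1 + M / N * s) ^ n :=
  calc ∑ i ∈ range (n + 1), (M.choose i * (N - M).choose (n - i) : ℝ) * (1 + s) ^ i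
      = ∑ k ∈ range (n + 1), (M.choose k * (N - k).choose (n - k) : ℝ) * s ^ k :=
        sum_choose_mul_choose_mul_one_add_pow hMN s
    _ ≤ ∑ k ∈ range (n + 1), N.choose n * n.choose k * ((M : ℝ) / N) ^ k * s ^ k :=
        sum_le_sum fun k hk => mul_le_mul_of_nonneg_right
          (choose_mul_choose_sub_le_choose_mul_pow hMN hN (Nat.lt_succ_iff.1 (mem_range.1 hk)))
          (pow_nonneg hs k)
    _ = N.choose n * (1 + M / N * s) ^ n := by
        rw [add_comm (1 : ℝ), add_pow, mul_sum]
        exact sum_congr rfl fun k _ => by ring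

theorem one_sub_add_mul_exp_le_exp (p l : ℝ) (hp : p ∈ unitInterval) :
    1 - p + p * exp l ≤ exp (p * l + l ^ 2 / 8) := by
  lift p to unitInterval using hp
  have hsupp : ∀ᵐ x ∂Ber((1 : ℝ), 0, p), x ∈ Set.Icc (0 : ℝ) 1 := by
    rw [ae_iff]
    exact bernoulliMeasure_apply_of_notMem_of_notMem p measurableSet_Icc.compl
      (by norm_num) (by norm_num)
  have hoeffding := (hasSubgaussianMGF_of_mem_Icc aemeasurable_id hsupp).mgf_le l
  simp only [mgf, integral_bernoulliMeasure, id, smul_eq_mul] at hoeffding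
  norm_num at hoeffding
  have h1 : exp (p * l) * exp (l * (1 - p)) = exp l := by rw [← exp_add]; ring_nf
  have h0 : exp (p * l) * exp (-(l * p)) = 1 := by rw [← exp_add]; ring_nf; exact exp_zero
  calc 1 - p + p * exp l
      = exp (p * l) * (p * exp (l * (1 - p)) + (1 - p) * exp (-(l * p))) := by
        linear_combination (-p : ℝ) * h1 - (1 - p : ℝ) * h0
    _ ≤ exp (p * l) * exp (l ^ 2 / 8) := by
        gcongr
        exact hoeffding.trans_eq (congrArg exp (by ring))
    _ = exp (p * l + l ^ 2 / 8) := (exp_add _ _).symm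

open Classical in
theorem hypergeom_upper_tail_expectation_general (N M n : ℕ) (hMN : M ≤ N) (hnN : n ≤ N)
    (hN : 0 < N) (t : ℝ) (ht : 0 ≤ t) :
    ∑ i ∈ (Finset.range (n + 1)).filter
        (fun (i : ℕ) => (n : ℝ) * M / N + t * n ≤ (i : ℝ)),
        ((M.choose i * (N - M).choose (n - i) : ℝ) / (N.choose n : ℝ))
      ≤ Real.exp (-2 * t ^ 2 * n) := by
  have hp : (M : ℝ) / N ∈ unitInterval :=
    ⟨by positivity, div_le_one_of_le₀ (by exact_mod_cast hMN) (Nat.cast_nonneg _)⟩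
  have hC : (0 : ℝ) < N.choose n := by exact_mod_cast Nat.choose_pos hnN
  set a := (n : ℝ) * M / N + t * n
  set y := exp (4 * t)
  calc _ ≤ ∑ i ∈ range (n + 1),
          (M.choose i * (N - M).choose (n - i) : ℝ) / N.choose n * exp (4 * t * (i - a)) :=
        sum_filter_le_sum_mul_exp _ _ _ (fun i _ => by positivity) _ (by positivity)
    _ = exp (-(4 * t * a)) * (∑ i ∈ range (n + 1),
          (M.choose i * (N - M).choose (n - i) : ℝ) * (1 + (y - 1)) ^ i) / N.choose n := by
        rw [mul_sum, sum_div]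
        refine sum_congr rfl fun i _ => ?_
        rw [add_sub_cancel, ← exp_nat_mul,
          show 4 * t * (i - a) = -(4 * t * a) + i * (4 * t) by ring, exp_add]
        ring
    _ ≤ exp (-(4 * t * a)) * (N.choose n * (1 + M / N * (y - 1)) ^ n) / N.choose n := by
        gcongr
        exact sum_choose_mul_choose_mul_pow_le hMN hN
          (sub_nonneg.2 (one_le_exp (by positivity)))
    _ = exp (-(4 * t * a)) * (1 - M / N + M / N * y) ^ n := by field_simp; ring
    _ ≤ exp (-(4 * t * a)) * exp (M / N * (4 * t) + (4 * t) ^ 2 / 8) ^ n := by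
        gcongr
        · exact add_nonneg (sub_nonneg.2 hp.2) (mul_nonneg hp.1 (exp_pos _).le)
        · exact one_sub_add_mul_exp_le_exp _ _ hp
    _ = exp (-2 * t ^ 2 * n) := by
        rw [← exp_nat_mul, ← exp_add]
        congr 1
        ring

open Classical in
theorem hypergeom_upper_tail_expectation (N M n : ℕ) (hMN : M ≤ N) (hnN : n ≤ N)
    (hN : 0 < N) (hn : 0 < n) (t : ℝ) (ht : 0 ≤ t) :
    ∑ i ∈ (Finset.range (n + 1)).filter
        (fun (i : ℕ) => (n : ℝ) * M / N + t * n ≤ (i : ℝ)),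
        ((M.choose i * (N - M).choose (n - i) : ℝ) / (N.choose n : ℝ))
      ≤ Real.exp (-2 * t ^ 2 * n) :=
  hypergeom_upper_tail_expectation_general N M n hMN hnN hN t ht
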